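/- (Gagliardo–Nirenberg, d=2) There is a constant C such that for all f ∈ H¹(ℝ²), ‖f‖_{L⁴(ℝ²)}² ≤ C ‖f‖_{L²} ‖∇f‖_{L²}. -/

import Mathlib

/-!
Along each horizontal line, `g(x, y)² = ∫_{t < x} ∂₁(g²)(t, y)`, so
`g(x, y)² ≤ 2 ∫ |g| |∇g| (t, y) dt`, and symmetrically along vertical lines. Multiplying the two
bounds, `g(x, y)⁴` is dominated by a product `A(x) B(y)` of slice integrals; by Tonelli both
`∫ A` and `∫ B` equal `2 ∫ |g| |∇g|`, which Cauchy–Schwarz bounds by `2 ‖g‖₂ ‖∇g‖₂`. The Euclidean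
plane is identified with `ℝ × ℝ` by a measure-preserving linear map sending the coordinate vectors
to unit vectors, so that the partial derivatives are bounded by `‖∇f‖` and the constant is `2`.
-/

open MeasureTheory Filter Set

theorem enorm_sq_le_two_mul_lintegral_enorm_mul_deriv {u : ℝ → ℝ} (hu : Differentiable ℝ u)
    (hu2 : MemLp u 2) (b : ℝ) :
    ‖u b‖ₑ ^ 2 ≤ 2 * ∫⁻ t, ‖u t‖ₑ * ‖deriv u t‖ₑ := by
  by_cases htop : ∫⁻ t, ‖u t‖ₑ * ‖deriv u t‖ₑ = ⊤
  · simp [htop]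
  have hint : Integrable (fun t => 2 * (u t * deriv u t)) := by
    refine Integrable.const_mul ⟨hu.continuous.aestronglyMeasurable.mul
      (measurable_deriv u).aestronglyMeasurable, ?_⟩ 2
    simpa [HasFiniteIntegral, enorm_mul] using lt_top_iff_ne_top.2 htop
  have hderiv : ∀ t, HasDerivAt (fun t => u t ^ 2) (2 * (u t * deriv u t)) t := fun t =>
    (hu t).hasDerivAt.fun_pow 2 |>.congr_deriv (by push_cast; ring)
  have hlim : Tendsto (fun t => u t ^ 2) atBot (nhds 0) :=
    tendsto_zero_of_hasDerivAt_of_integrableOn_Iic (a := b) (fun t _ => hderiv t)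
      hint.integrableOn hu2.integrable_sq.integrableOn
  have hftc : ∫ t in Iic b, 2 * (u t * deriv u t) = u b ^ 2 := by
    rw [integral_Iic_of_hasDerivAt_of_tendsto' (fun t _ => hderiv t) hint.integrableOn hlim,
      sub_zero]
  calc ‖u b‖ₑ ^ 2 = ‖∫ t in Iic b, 2 * (u t * deriv u t)‖ₑ := by rw [hftc, enorm_pow]
    _ ≤ ∫⁻ t in Iic b, ‖2 * (u t * deriv u t)‖ₑ := enorm_integral_le_lintegral_enorm _
    _ ≤ ∫⁻ t, ‖2 * (u t * deriv u t)‖ₑ := setLIntegral_le_lintegral _ _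
    _ = 2 * ∫⁻ t, ‖u t‖ₑ * ‖deriv u t‖ₑ := by
      simp only [enorm_mul, show ‖(2 : ℝ)‖ₑ = 2 from Real.enorm_natCast 2]
      exact lintegral_const_mul' _ _ ENNReal.ofNat_ne_top

section Plane

variable {E : Type*} [NormedAddCommGroup E] {g : ℝ × ℝ → ℝ} {F : ℝ × ℝ → E}

theorem ae_forall_enorm_sq_le_lintegral_slice (hg : Differentiable ℝ g) (hg2 : MemLp g 2)
    (hF : ∀ z, ‖fderiv ℝ g z (1, 0)‖ ≤ ‖F z‖) :
    ∀ᵐ y, ∀ x, ‖g (x, y)‖ₑ ^ 2 ≤ 2 * ∫⁻ t, ‖g (t, y)‖ₑ * ‖F (t, y)‖ₑ := by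
  have hslices : ∀ᵐ y, Integrable (fun x => g (x, y) ^ 2) :=
    hg2.integrable_sq.prod_left_ae
  filter_upwards [hslices] with y hy x
  have hderiv : ∀ t, HasDerivAt (fun t => g (t, y)) (fderiv ℝ g (t, y) (1, 0)) t := fun t =>
    (hg (t, y)).hasFDerivAt.comp_hasDerivAt t ((hasDerivAt_id t).prodMk (hasDerivAt_const t y))
  have hcont : Continuous fun t => g (t, y) := hg.continuous.comp (.prodMk_left y)
  calc ‖g (x, y)‖ₑ ^ 2
      ≤ 2 * ∫⁻ t, ‖g (t, y)‖ₑ * ‖deriv (fun t => g (t, y)) t‖ₑ :=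
        enorm_sq_le_two_mul_lintegral_enorm_mul_deriv (fun t => (hderiv t).differentiableAt)
          ((memLp_two_iff_integrable_sq hcont.aestronglyMeasurable).2 hy) x
    _ ≤ 2 * ∫⁻ t, ‖g (t, y)‖ₑ * ‖F (t, y)‖ₑ := by
        gcongr with t
        rw [(hderiv t).deriv]
        exact enorm_le_iff_norm_le.2 (hF (t, y))

theorem fderiv_comp_swap_apply (hg : Differentiable ℝ g) (z v : ℝ × ℝ) :
    fderiv ℝ (g ∘ Prod.swap) z v = fderiv ℝ g z.swap v.swap :=
  congrArg (· v) ((hg z.swap).hasFDerivAt.comp z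
    (ContinuousLinearEquiv.prodComm ℝ ℝ ℝ).hasFDerivAt).fderiv

theorem lintegral_enorm_pow_four_le (hg : Differentiable ℝ g) (hg2 : MemLp g 2)
    (hF : StronglyMeasurable F) (h₁ : ∀ z, ‖fderiv ℝ g z (1, 0)‖ ≤ ‖F z‖)
    (h₂ : ∀ z, ‖fderiv ℝ g z (0, 1)‖ ≤ ‖F z‖) :
    ∫⁻ z, ‖g z‖ₑ ^ 4 ≤ (2 * ∫⁻ z, ‖g z‖ₑ * ‖F z‖ₑ) ^ 2 := by
  set Q : ℝ × ℝ → ENNReal := fun z => ‖g z‖ₑ * ‖F z‖ₑ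
  have hQ : Measurable Q := hg.continuous.measurable.enorm.mul hF.enorm
  have hrow : ∀ᵐ y, ∀ x, ‖g (x, y)‖ₑ ^ 2 ≤ 2 * ∫⁻ t, Q (t, y) :=
    ae_forall_enorm_sq_le_lintegral_slice hg hg2 h₁
  have hcol : ∀ᵐ x, ∀ y, ‖g (x, y)‖ₑ ^ 2 ≤ 2 * ∫⁻ s, Q (x, s) :=
    ae_forall_enorm_sq_le_lintegral_slice (F := F ∘ Prod.swap) (g := g ∘ Prod.swap)
      (hg.comp (ContinuousLinearEquiv.prodComm ℝ ℝ ℝ).differentiable)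
      (hg2.comp_measurePreserving Measure.measurePreserving_swap)
      (fun z => by simpa [fderiv_comp_swap_apply hg] using h₂ z.swap)
  have hpointwise : ∀ᵐ z : ℝ × ℝ, ‖g z‖ₑ ^ 4 ≤ (2 * ∫⁻ s, Q (z.1, s)) * (2 * ∫⁻ t, Q (t, z.2)) := by
    filter_upwards [Measure.quasiMeasurePreserving_fst.ae hcol,
      Measure.quasiMeasurePreserving_snd.ae hrow] with z hx hy
    calc ‖g z‖ₑ ^ 4 = ‖g z‖ₑ ^ 2 * ‖g z‖ₑ ^ 2 := by ring
      _ ≤ _ := mul_le_mul' (hx z.2) (hy z.1)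
  calc ∫⁻ z, ‖g z‖ₑ ^ 4
      ≤ ∫⁻ z : ℝ × ℝ, (2 * ∫⁻ s, Q (z.1, s)) * (2 * ∫⁻ t, Q (t, z.2)) :=
        lintegral_mono_ae hpointwise
    _ = (∫⁻ x, 2 * ∫⁻ s, Q (x, s)) * ∫⁻ y, 2 * ∫⁻ t, Q (t, y) :=
        lintegral_prod_mul (hQ.lintegral_prod_right'.const_mul 2).aemeasurable
          (hQ.lintegral_prod_left'.const_mul 2).aemeasurable
    _ = (2 * ∫⁻ z, Q z) ^ 2 := by
        rw [lintegral_const_mul _ hQ.lintegral_prod_right',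
          lintegral_const_mul _ hQ.lintegral_prod_left',
          ← lintegral_prod _ hQ.aemeasurable, ← lintegral_prod_symm _ hQ.aemeasurable,
          ← Measure.volume_eq_prod, sq]

theorem eLpNorm_four_sq_le_of_partial_deriv_le [NormedSpace ℝ E] (hg : Differentiable ℝ g)
    (hg2 : MemLp g 2) (hF : StronglyMeasurable F) (h₁ : ∀ z, ‖fderiv ℝ g z (1, 0)‖ ≤ ‖F z‖)
    (h₂ : ∀ z, ‖fderiv ℝ g z (0, 1)‖ ≤ ‖F z‖) :
    eLpNorm g 4 ^ 2 ≤ 2 * eLpNorm g 2 * eLpNorm F 2 := by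
  have hpow : eLpNorm g 4 ^ 4 = ∫⁻ z, ‖g z‖ₑ ^ 4 := by
    simpa using eLpNorm_nnreal_pow_eq_lintegral (f := g) (μ := volume) (p := 4) (by norm_num)
  have hHolder : ∫⁻ z, ‖g z‖ₑ * ‖F z‖ₑ ≤ eLpNorm g 2 * eLpNorm F 2 := by
    simpa [eLpNorm_one_eq_lintegral_enorm, enorm_smul] using
      eLpNorm_smul_le_mul_eLpNorm (p := 2) (q := 2) (r := 1) hF.aestronglyMeasurable
        hg.continuous.aestronglyMeasurable
  rw [← ENNReal.pow_le_pow_left_iff two_ne_zero, ← pow_mul, hpow, mul_assoc]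
  calc ∫⁻ z, ‖g z‖ₑ ^ 4 ≤ (2 * ∫⁻ z, ‖g z‖ₑ * ‖F z‖ₑ) ^ 2 :=
        lintegral_enorm_pow_four_le hg hg2 hF h₁ h₂
    _ ≤ _ := by gcongr

end Plane

theorem norm_fderiv_comp_clm_apply_le {E F : Type*} [NormedAddCommGroup E] [NormedSpace ℝ E]
    [NormedAddCommGroup F] [NormedSpace ℝ F] {f : F → ℝ} (hf : Differentiable ℝ f)
    (L : E →L[ℝ] F) (z v : E) :
    ‖fderiv ℝ (f ∘ L) z v‖ ≤ ‖fderiv ℝ f (L z)‖ * ‖L v‖ := by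
  rw [((hf (L z)).hasFDerivAt.comp z L.hasFDerivAt).fderiv]
  exact (fderiv ℝ f (L z)).le_opNorm (L v)

noncomputable def prodEquivEuclidean : (ℝ × ℝ) ≃L[ℝ] EuclideanSpace ℝ (Fin 2) :=
  (ContinuousLinearEquiv.finTwoArrow ℝ ℝ).symm.trans (EuclideanSpace.equiv (Fin 2) ℝ).symm

theorem measurePreserving_prodEquivEuclidean : MeasurePreserving prodEquivEuclidean :=
  (PiLp.volume_preserving_toLp (Fin 2)).comp (volume_preserving_finTwoArrow ℝ).symm

theorem norm_prodEquivEuclidean_one_zero : ‖prodEquivEuclidean (1, 0)‖ = 1 := by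
  simp [prodEquivEuclidean, EuclideanSpace.norm_eq]

theorem norm_prodEquivEuclidean_zero_one : ‖prodEquivEuclidean (0, 1)‖ = 1 := by
  simp [prodEquivEuclidean, EuclideanSpace.norm_eq]

/-- Ladyzhenskaya's inequality in dimension 2: there is `C` such that
`‖f‖_{L⁴(ℝ²)}² ≤ C ‖f‖_{L²} ‖∇f‖_{L²}` for all `f ∈ H¹(ℝ²)`. -/
theorem ladyzhenskaya_dim2 :
    ∃ C > 0, ∀ f : EuclideanSpace ℝ (Fin 2) → ℝ,
      Differentiable ℝ f → MemLp f 2 volume → MemLp (fderiv ℝ f) 2 volume →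
      (eLpNorm f 4 volume) ^ 2
        ≤ ENNReal.ofReal C * eLpNorm f 2 volume * eLpNorm (fderiv ℝ f) 2 volume := by
  refine ⟨2, two_pos, fun f hf hf2 _ => ?_⟩
  rw [ENNReal.ofReal_ofNat]
  set κ := prodEquivEuclidean
  have hκ : MeasurePreserving κ := measurePreserving_prodEquivEuclidean
  have hpartial : ∀ z v, ‖κ v‖ = 1 → ‖fderiv ℝ (f ∘ κ) z v‖ ≤ ‖(fderiv ℝ f ∘ κ) z‖ := by
    intro z v hv
    simpa [hv] using norm_fderiv_comp_clm_apply_le hf (κ : (ℝ × ℝ) →L[ℝ] _) z v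
  have hdf : StronglyMeasurable (fderiv ℝ f) := (measurable_fderiv ℝ f).stronglyMeasurable
  have key := eLpNorm_four_sq_le_of_partial_deriv_le (hf.comp κ.differentiable)
    (hf2.comp_measurePreserving hκ) (hdf.comp_measurable κ.continuous.measurable)
    (hpartial · _ norm_prodEquivEuclidean_one_zero) (hpartial · _ norm_prodEquivEuclidean_zero_one)
  rwa [eLpNorm_comp_measurePreserving hf.continuous.aestronglyMeasurable hκ,
    eLpNorm_comp_measurePreserving hf.continuous.aestronglyMeasurable hκ,
    eLpNorm_comp_measurePreserving hdf.aestronglyMeasurable hκ] at key
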